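/- Every simplicial abelian group satisfies the Kan extension condition: every map of simplicial sets from the k-horn Λ^k[n] to the underlying simplicial set of a simplicial abelian group extends to a map from Δ[n]. -/

import Mathlib

open CategoryTheory

universe u

open Simplicial in
/-- The definition of `SSet.KanComplex` as it stood in Mathlib of December 2024:
horn filling for every `n : ℕ` and every `i : Fin (n + 1)` (including `n = 0`). -/
class SSet.KanComplexOld (S : SSet.{u}) : Prop where
  hornFilling : ∀ ⦃n : ℕ⦄ ⦃i : Fin (n+1)⦄ (σ₀ : (Λ[n, i] : SSet.{u}) ⟶ S),
    ∃ σ : Δ[n] ⟶ S, σ₀ = Λ[n, i].ι ≫ σ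

open Simplicial Opposite

/-!
Moore's argument. The faces of an `(n + 2)`-simplex `v` of a simplicial abelian group can be
corrected one at a time: if `v` already has the prescribed faces `x j` for `j ∈ S`, then
`v + s_k (x r - d_r v)`, with `k = r` or `k = r - 1` so that `d_r s_k = id`, has face `x r` at `r`
and keeps the faces on `S` as long as `k, k + 1 ∉ S`. Indeed the defects `x j - d_j v` again
satisfy the simplicial identities of a horn, which kills `d_j s_k (x r - d_r v)` for `j ∈ S`.
Filling the faces `0, …, i - 1` upwards with `k = r`, then `n + 2, …, i + 1` downwards with
`k = r - 1`, never violates `k, k + 1 ∉ S`.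
-/

namespace SimplicialObject

variable {A : SimplicialObject AddCommGrpCat.{u}} {n : ℕ}

/-- A horn in `A` given by its faces `x j`, `j ≠ i`; the value `x i` is ignored. -/
def HornCompatible (i : Fin (n + 3)) (x : Fin (n + 3) → A _⦋n + 1⦌) : Prop :=
  ∀ p q : Fin (n + 2), p ≤ q → p.castSucc ≠ i → q.succ ≠ i →
    A.δ p (x q.succ) = A.δ q (x p.castSucc)

namespace HornCompatible

variable {i : Fin (n + 3)} {x D : Fin (n + 3) → A _⦋n + 1⦌}

lemma sub_δ (hx : HornCompatible i x) (v : A _⦋n + 2⦌) :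
    HornCompatible i (fun j ↦ x j - A.δ j v) := by
  intro p q hpq hp hq
  simp only [map_sub, hx p q hpq hp hq, elementwise_of% A.δ_comp_δ hpq]

lemma δ_castPred_eq_zero (hD : HornCompatible i D) {j r : Fin (n + 3)} (hj : j ≠ i)
    (hr : r ≠ i) (hDj : D j = 0) (hjr : j < r) :
    A.δ (j.castPred (Fin.ne_last_of_lt hjr)) (D r) = 0 := by
  obtain ⟨p, rfl⟩ := j.eq_castSucc_of_ne_last (Fin.ne_last_of_lt hjr)
  obtain ⟨q, rfl⟩ := r.eq_succ_of_ne_zero (Fin.ne_zero_of_lt hjr)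
  rw [Fin.castPred_castSucc, hD p q (Fin.castSucc_lt_succ_iff.1 hjr) hj hr, hDj, map_zero]

lemma δ_pred_eq_zero (hD : HornCompatible i D) {j r : Fin (n + 3)} (hj : j ≠ i)
    (hr : r ≠ i) (hDj : D j = 0) (hrj : r < j) :
    A.δ (j.pred (Fin.ne_zero_of_lt hrj)) (D r) = 0 := by
  obtain ⟨p, rfl⟩ := r.eq_castSucc_of_ne_last (Fin.ne_last_of_lt hrj)
  obtain ⟨q, rfl⟩ := j.eq_succ_of_ne_zero (Fin.ne_zero_of_lt hrj)
  rw [Fin.pred_succ, ← hD p q (Fin.castSucc_lt_succ_iff.1 hrj) hr hj, hDj, map_zero]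

lemma δ_σ_eq_zero (hD : HornCompatible i D) {j r : Fin (n + 3)} {s : Fin (n + 2)}
    (hj : j ≠ i) (hr : r ≠ i) (hDj : D j = 0) (hrs : r = s.castSucc ∨ r = s.succ)
    (hjs : j ≠ s.castSucc) (hjs' : j ≠ s.succ) :
    A.δ j (A.σ s (D r)) = 0 := by
  rcases lt_or_gt_of_ne hjs with hjs | hsj
  · have hjr : j < r := by grind
    obtain ⟨j, rfl⟩ := j.eq_castSucc_of_ne_last (Fin.ne_last_of_lt hjs)
    obtain ⟨t, rfl⟩ := s.eq_succ_of_ne_zero (by grind)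
    have hjt : j ≤ t.castSucc := by grind
    rw [elementwise_of% A.δ_comp_σ_of_le hjt]
    simpa using congrArg (A.σ t) (hD.δ_castPred_eq_zero hj hr hDj hjr)
  · replace hsj : s.succ < j := (Fin.castSucc_lt_iff_succ_le.1 hsj).lt_of_ne hjs'.symm
    have hrj : r < j := by grind
    rw [elementwise_of% A.δ_comp_σ_of_gt' hsj]
    simpa using congrArg (A.σ _) (hD.δ_pred_eq_zero hj hr hDj hrj)

lemma exists_δ_eq_insert (hx : HornCompatible i x) {S : Set (Fin (n + 3))} (hiS : i ∉ S)
    {v : A _⦋n + 2⦌} (hv : ∀ j ∈ S, A.δ j v = x j) {r : Fin (n + 3)} (hri : r ≠ i)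
    {s : Fin (n + 2)} (hrs : r = s.castSucc ∨ r = s.succ) (hsS : s.castSucc ∉ S)
    (hsS' : s.succ ∉ S) :
    ∃ u : A _⦋n + 2⦌, ∀ j ∈ insert r S, A.δ j u = x j := by
  refine ⟨v + A.σ s (x r - A.δ r v), ?_⟩
  rintro j (rfl | hj)
  · have hδσ : A.δ j (A.σ s (x j - A.δ j v)) = x j - A.δ j v := by
      rcases hrs with rfl | rfl
      · exact (elementwise_of% (A.δ_comp_σ_self (i := s))) _
      · exact (elementwise_of% (A.δ_comp_σ_succ (i := s))) _
    rw [map_add, hδσ, add_sub_cancel]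
  · have hDj : x j - A.δ j v = 0 := sub_eq_zero.2 (hv j hj).symm
    rw [map_add, (hx.sub_δ v).δ_σ_eq_zero (ne_of_mem_of_not_mem hj hiS) hri hDj hrs
      (ne_of_mem_of_not_mem hj hsS) (ne_of_mem_of_not_mem hj hsS'), add_zero, hv j hj]

lemma exists_δ_eq_of_lt (hx : HornCompatible i x) (m : ℕ) (hm : m ≤ i) :
    ∃ v : A _⦋n + 2⦌, ∀ j : Fin (n + 3), j < m → A.δ j v = x j := by
  induction m with
  | zero => exact ⟨0, by simp⟩
  | succ m ih =>
    obtain ⟨v, hv⟩ := ih (by omega)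
    obtain ⟨u, hu⟩ := hx.exists_δ_eq_insert (S := {j | j < m}) (by grind) hv
      (r := ⟨m, by omega⟩) (by grind) (s := ⟨m, by omega⟩) (Or.inl rfl)
      (by grind) (by grind)
    refine ⟨u, fun j hj ↦ hu j ?_⟩
    grind

lemma exists_δ_eq_of_lt_or_gt (hx : HornCompatible i x) (t : ℕ) (ht : t ≤ n + 2 - i) :
    ∃ v : A _⦋n + 2⦌, ∀ j : Fin (n + 3), j < i ∨ n + 2 - t < j → A.δ j v = x j := by
  induction t with
  | zero =>
    obtain ⟨v, hv⟩ := hx.exists_δ_eq_of_lt i le_rfl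
    exact ⟨v, fun j hj ↦ hv j (by omega)⟩
  | succ t ih =>
    obtain ⟨v, hv⟩ := ih (by omega)
    obtain ⟨u, hu⟩ := hx.exists_δ_eq_insert (S := {j | j < i ∨ n + 2 - t < j})
      (by grind) hv (r := ⟨n + 2 - t, by omega⟩) (by grind)
      (s := ⟨n + 1 - t, by omega⟩) (Or.inr (by grind)) (by grind) (by grind)
    refine ⟨u, fun j hj ↦ hu j ?_⟩
    grind

theorem exists_δ_eq (hx : HornCompatible i x) :
    ∃ y : A _⦋n + 2⦌, ∀ j ≠ i, A.δ j y = x j := by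
  obtain ⟨y, hy⟩ := hx.exists_δ_eq_of_lt_or_gt (n + 2 - i) le_rfl
  exact ⟨y, fun j hj ↦ hy j (by have := Fin.val_ne_of_ne hj; omega)⟩

end HornCompatible

lemma exists_δ_eq_of_fin_two (i : Fin 2) (x : Fin 2 → A _⦋0⦌) :
    ∃ y : A _⦋1⦌, ∀ j ≠ i, A.δ j y = x j := by
  refine ⟨A.σ 0 (x i.rev), fun j hj ↦ ?_⟩
  obtain rfl : j = i.rev := by grind
  fin_cases i
  · exact (elementwise_of% (A.δ_comp_σ_succ (i := 0))) _
  · exact (elementwise_of% (A.δ_comp_σ_self (i := 0))) _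

variable (A) in
abbrev toSSet : SSet.{u} :=
  ((SimplicialObject.whiskering AddCommGrpCat (Type u)).obj (forget AddCommGrpCat)).obj A

open SSet

section

variable {i : Fin (n + 2)} (f : ∀ (j : Fin (n + 2)) (_ : j ≠ i), Δ[n] ⟶ toSSet A)

noncomputable def hornSimplices (j : Fin (n + 2)) : A _⦋n⦌ :=
  if h : j = i then 0 else SSet.yonedaEquiv (f j h)

variable {f}

lemma hornSimplices_of_ne {j : Fin (n + 2)} (hj : j ≠ i) :
    hornSimplices f j = SSet.yonedaEquiv (f j hj) :=
  dif_neg hj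

lemma δ_comp_yonedaEquiv_symm_eq {y : A _⦋n + 1⦌}
    (hy : ∀ j ≠ i, A.δ j y = hornSimplices f j) (j : Fin (n + 2)) (hj : j ≠ i) :
    stdSimplex.δ j ≫ SSet.yonedaEquiv (X := toSSet A).symm y = f j hj := by
  refine (stdSimplex.δ_comp_yonedaEquiv_symm (X := toSSet A) y j).trans ?_
  rw [Equiv.symm_apply_eq]
  exact (hy j hj).trans (hornSimplices_of_ne hj)

end

lemma hornCompatible_hornSimplices {i : Fin (n + 3)}
    {f : ∀ (j : Fin (n + 3)) (_ : j ≠ i), Δ[n + 1] ⟶ toSSet A} (hf : horn.IsCompatible f) :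
    HornCompatible i (hornSimplices f) := by
  intro p q hpq hp hq
  have h := congrArg SSet.yonedaEquiv (hf _ _ hp hq (Fin.castSucc_lt_succ_iff.2 hpq))
  rw [stdSimplex.yonedaEquiv_δ_comp, stdSimplex.yonedaEquiv_δ_comp] at h
  rw [hornSimplices_of_ne hp, hornSimplices_of_ne hq]
  exact h.symm

instance kanComplex_toSSet : KanComplex (toSSet A) := by
  rw [KanComplex.iff]
  intro n i f hf
  obtain _ | n := n
  · obtain ⟨y, hy⟩ := exists_δ_eq_of_fin_two i (hornSimplices f)
    exact ⟨_, δ_comp_yonedaEquiv_symm_eq hy⟩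
  · obtain ⟨y, hy⟩ := (hornCompatible_hornSimplices hf).exists_δ_eq
    exact ⟨_, δ_comp_yonedaEquiv_symm_eq hy⟩

end SimplicialObject

lemma SSet.KanComplexOld.of_kanComplex {S : SSet.{u}} [KanComplex S] (x : S _⦋0⦌) :
    KanComplexOld S where
  hornFilling n i σ₀ := by
    obtain _ | n := n
    · refine ⟨SSet.yonedaEquiv.symm x, ?_⟩
      -- `Λ[0, i]` has no simplices
      ext _ ⟨_, ha⟩
      exact (ha (Set.eq_univ_of_forall fun j ↦ Or.inr (Subsingleton.elim (α := Fin 1) j i))).elim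
    · exact KanComplex.hornFilling σ₀

/-- Every simplicial abelian group satisfies the Kan extension condition: every map
of simplicial sets from a horn `Λ[n, k]` to the underlying simplicial set of a
simplicial abelian group extends over the full simplex `Δ[n]`. -/
theorem simplicial_abelian_group_is_kan (A : SimplicialObject AddCommGrpCat.{0}) :
    SSet.KanComplexOld
      (((SimplicialObject.whiskering AddCommGrpCat (Type)).obj (forget AddCommGrpCat)).obj A) :=
  .of_kanComplex (0 : A _⦋0⦌)
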